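/- Let C = ⟨g_1(x), g_2(x)⟩ be the cyclic code of length n = p^k over R = F[u]/⟨u⁴⟩ generated by g_1(x) = u(x−1)^{r_1} + u²(x−1)^{k_4}p_4(x) + u³(x−1)^{k_5}p_5(x) and g_2(x) = u²(x−1)^{r_2} + u³(x−1)^{k_6}p_6(x), where 0 ≤ r_2 ≤ r_1 < n, k_4 < r_2, k_5 < r_2, k_6 < r_2, and p_4, p_5, p_6 are units of F[x]/⟨xⁿ − 1⟩. Then the five elements u³(x−1)^{r_1}, u³(x−1)^{n−r_1+k_4}, u³(x−1)^{r_2}, u³(x−1)^{n−k_4+k_5}, u³(x−1)^{n−r_2+k_6} all belong to C; consequently the third torsional degree of C satisfies t_3 ≤ min{r_2, n−r_1+k_4, n−k_4+k_5, n−r_2+k_6}. -/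

import Mathlib

open Polynomial
open scoped Classical

noncomputable section

/-- The ring `R = F[u]/⟨u⁴⟩`. -/
abbrev Rq (F : Type) [Field F] : Type :=
  Polynomial F ⧸ Ideal.span ({X ^ 4} : Set (Polynomial F))

/-- The ring `S = R[x]/⟨xⁿ − 1⟩`. -/
abbrev Sq (F : Type) [Field F] (n : ℕ) : Type :=
  Polynomial (Rq F) ⧸ Ideal.span ({X ^ n - 1} : Set (Polynomial (Rq F)))

/-- Port helper: the ideal `⟨xⁿ − 1⟩` of the commutative ring `R[x]` is two-sided. -/
instance instTwoSidedSq (F : Type) [Field F] (n : ℕ) :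
    (Ideal.span ({X ^ n - 1} : Set (Polynomial (Rq F)))).IsTwoSided :=
  ⟨fun b ha => mul_comm b _ ▸ Ideal.mul_mem_left _ b ha⟩

/-- The ring `Q = F[x]/⟨xⁿ − 1⟩`. -/
abbrev Qq (F : Type) [Field F] (n : ℕ) : Type :=
  Polynomial F ⧸ Ideal.span ({X ^ n - 1} : Set (Polynomial F))

/-- The element `u` of `R`. -/
def uu (F : Type) [Field F] : Rq F := Ideal.Quotient.mk _ X

/-- The element `u` of `S`. -/
def uS (F : Type) [Field F] (n : ℕ) : Sq F n := Ideal.Quotient.mk _ (C (uu F))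

/-- The element `x` of `S`. -/
def xS (F : Type) [Field F] (n : ℕ) : Sq F n := Ideal.Quotient.mk _ X

/-- The element `x` of `Q`. -/
def xQ (F : Type) [Field F] (n : ℕ) : Qq F n := Ideal.Quotient.mk _ X

/-- Reduction `R → F` modulo `u`. -/
def resHom (F : Type) [Field F] : Rq F →+* F :=
  Ideal.Quotient.lift _ (evalRingHom 0) (by
    intro a ha
    rw [Ideal.mem_span_singleton] at ha
    obtain ⟨c, rfl⟩ := ha
    simp)

/-- Reduction `μ : S → Q` modulo `u`. -/
def muHom (F : Type) [Field F] (n : ℕ) : Sq F n →+* Qq F n :=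
  Ideal.Quotient.lift _ ((Ideal.Quotient.mk _).comp (mapRingHom (resHom F))) (by
    intro a ha
    rw [Ideal.mem_span_singleton'] at ha
    obtain ⟨c, rfl⟩ := ha
    rw [RingHom.comp_apply, map_mul, Ideal.Quotient.eq_zero_iff_mem]
    apply Ideal.mul_mem_left
    have h : (mapRingHom (resHom F)) (X ^ n - 1 : Polynomial (Rq F))
        = (X ^ n - 1 : Polynomial F) := by simp
    rw [h]
    exact Ideal.subset_span rfl)

/-- The natural lift `Q → S` (sending `a ∈ F` to itself and `x ↦ x`). -/
def liftQS (F : Type) [Field F] (n : ℕ) : Qq F n →+* Sq F n :=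
  Ideal.Quotient.lift _
    ((Ideal.Quotient.mk _).comp
      (mapRingHom ((Ideal.Quotient.mk _).comp (C : F →+* Polynomial F)))) (by
    intro a ha
    rw [Ideal.mem_span_singleton] at ha
    obtain ⟨c, rfl⟩ := ha
    rw [RingHom.comp_apply, map_mul, Ideal.Quotient.eq_zero_iff_mem]
    apply Ideal.mul_mem_right
    have h : (mapRingHom ((Ideal.Quotient.mk (Ideal.span ({X ^ 4} : Set (Polynomial F)))).comp
        (C : F →+* Polynomial F))) (X ^ n - 1 : Polynomial F)
        = (X ^ n - 1 : Polynomial (Rq F)) := by simp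
    rw [h]
    exact Ideal.subset_span rfl)

/-- The `i`-th torsion code `Tor_i(C) = {μ(g) : uⁱ·g ∈ C}`, as a subset of `Q`. -/
def TorSet (F : Type) [Field F] (n : ℕ) (i : ℕ) (Cc : Ideal (Sq F n)) : Set (Qq F n) :=
  { a | ∃ g : Sq F n, (uS F n) ^ i * g ∈ Cc ∧ muHom F n g = a }

/-- The code `C` has `i`-th torsional degree `t`, i.e. `Tor_i(C) = ⟨(x−1)^t⟩` with `0 ≤ t ≤ n`. -/
def HasTorDeg (F : Type) [Field F] (n : ℕ) (i : ℕ) (Cc : Ideal (Sq F n)) (t : ℕ) : Prop :=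
  t ≤ n ∧ TorSet F n i Cc = ↑(Ideal.span {(xQ F n - 1) ^ t})

/-- An element of `S` that is the lift of a unit of `Q = F[x]/⟨xⁿ−1⟩`. -/
def IsUnitLift (F : Type) [Field F] (n : ℕ) (a : Sq F n) : Prop :=
  ∃ q : Qq F n, IsUnit q ∧ a = liftQS F n q

/-- An element of `S` that is zero or the lift of a unit of `Q = F[x]/⟨xⁿ−1⟩`. -/
def UnitOrZeroLift (F : Type) [Field F] (n : ℕ) (a : Sq F n) : Prop :=
  a = 0 ∨ IsUnitLift F n a

/-!
Since `u⁴ = 0`, multiplying a generator by a power of `u` keeps only its `u³`-term, and since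
`(x − 1)^{p^k} = x^{p^k} − 1 = 0` in characteristic `p`, multiplying by `(x − 1)^{n − e}` kills
the term carrying `(x − 1)^e`; the surviving term is `u³(x − 1)^s` times a unit. Each such
membership puts `(x − 1)^s` into `Tor₃(C) = ⟨(x − 1)^{t₃}⟩`, and in `F[x]/⟨(x − 1)^n⟩` this
forces `(x − 1)^{t₃} ∣ (x − 1)^s` in `F[x]`, because `t₃ ≤ n`; hence `t₃ ≤ s`.
-/

section NilpotentReductions

variable {A : Type*} [CommRing A] {I : Ideal A} {u z : A}

theorem pow_three_mul_mem_of_pow_mul_mem (hu : u ^ 4 = 0) {i : ℕ} (hi : i ≤ 3) {a b : A}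
    (h : u ^ i * (a + u * b) ∈ I) : u ^ 3 * a ∈ I := by
  have key : u ^ (3 - i) * (u ^ i * (a + u * b)) = u ^ 3 * a := by
    rw [← mul_assoc, ← pow_add, Nat.sub_add_cancel hi, mul_add, ← mul_assoc, ← pow_succ, hu,
      zero_mul, add_zero]
  exact key ▸ I.mul_mem_left _ h

theorem pow_sub_mul_mem_of_pow_mul_add_mem {n r : ℕ} (hz : z ^ n = 0) (hr : r ≤ n) {a b : A}
    (h : z ^ r * a + b ∈ I) : z ^ (n - r) * b ∈ I := by
  have key : z ^ (n - r) * (z ^ r * a + b) = z ^ (n - r) * b := by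
    rw [mul_add, ← mul_assoc, ← pow_add, Nat.sub_add_cancel hr, hz, zero_mul, zero_add]
  exact key ▸ I.mul_mem_left _ h

variable {n r₁ r₂ k₄ k₅ k₆ : ℕ} {p₄ p₅ p₆ : A}

theorem mem_of_first_generator_mem (hu : u ^ 4 = 0) (hz : z ^ n = 0) (hp₄ : IsUnit p₄)
    (hp₅ : IsUnit p₅) (hr₁ : r₁ ≤ n) (hk₄ : k₄ ≤ r₁)
    (hg : u * z ^ r₁ + u ^ 2 * z ^ k₄ * p₄ + u ^ 3 * z ^ k₅ * p₅ ∈ I) :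
    u ^ 3 * z ^ r₁ ∈ I ∧ u ^ 3 * z ^ (n - r₁ + k₄) ∈ I ∧ u ^ 3 * z ^ (n - k₄ + k₅) ∈ I := by
  refine ⟨?_, ?_, ?_⟩
  · refine pow_three_mul_mem_of_pow_mul_mem hu (i := 1) (b := z ^ k₄ * p₄ + u * z ^ k₅ * p₅)
      (by norm_num) ?_
    convert hg using 1
    ring
  · have hug : z ^ r₁ * u ^ 2 + u ^ 3 * z ^ k₄ * p₄ ∈ I := by
      convert I.mul_mem_left u hg using 1
      linear_combination (-(z ^ k₅ * p₅)) * hu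
    rw [← I.mul_unit_mem_iff_mem hp₄]
    convert pow_sub_mul_mem_of_pow_mul_add_mem hz hr₁ hug using 1
    ring
  · obtain ⟨d, rfl⟩ := Nat.exists_eq_add_of_le hk₄
    have hg' : z ^ k₄ * (u * z ^ d + u ^ 2 * p₄) + u ^ 3 * z ^ k₅ * p₅ ∈ I := by
      convert hg using 1
      ring
    rw [← I.mul_unit_mem_iff_mem hp₅]
    convert pow_sub_mul_mem_of_pow_mul_add_mem hz (by omega) hg' using 1
    ring

theorem mem_of_second_generator_mem (hu : u ^ 4 = 0) (hz : z ^ n = 0) (hp₆ : IsUnit p₆)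
    (hr₂ : r₂ ≤ n) (hg : u ^ 2 * z ^ r₂ + u ^ 3 * z ^ k₆ * p₆ ∈ I) :
    u ^ 3 * z ^ r₂ ∈ I ∧ u ^ 3 * z ^ (n - r₂ + k₆) ∈ I := by
  refine ⟨?_, ?_⟩
  · refine pow_three_mul_mem_of_pow_mul_mem hu (i := 2) (b := z ^ k₆ * p₆) (by norm_num) ?_
    convert hg using 1
    ring
  · have hg' : z ^ r₂ * u ^ 2 + u ^ 3 * z ^ k₆ * p₆ ∈ I := by
      convert hg using 1
      ring
    rw [← I.mul_unit_mem_iff_mem hp₆]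
    convert pow_sub_mul_mem_of_pow_mul_add_mem hz hr₂ hg' using 1
    ring

end NilpotentReductions

theorem Ideal.Quotient.dvd_of_mk_mem_span_mk {A : Type*} [CommRing A] {J : Ideal A} {a b : A}
    (hJ : J ≤ Ideal.span {b}) (h : Ideal.Quotient.mk J a ∈ Ideal.span {Ideal.Quotient.mk J b}) :
    b ∣ a := by
  rw [← Set.image_singleton, ← Ideal.map_span, Ideal.mem_quotient_iff_mem hJ,
    Ideal.mem_span_singleton] at h
  exact h

-- Instance search times out on `CommRing (Sq F n)`, so the structure is named explicitly.
abbrev Sq.commRing (F : Type) [Field F] (n : ℕ) : CommRing (Sq F n) :=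
  @Ideal.Quotient.commRing (Polynomial (Rq F)) _ (Ideal.span {X ^ n - 1})

theorem uS_pow_four (F : Type) [Field F] (n : ℕ) : uS F n ^ 4 = 0 := by
  have h : uu F ^ 4 = 0 := by
    rw [uu, ← map_pow, Ideal.Quotient.eq_zero_iff_mem]
    exact Ideal.subset_span rfl
  rw [uS, ← map_pow, ← C_pow, h, map_zero, map_zero]

theorem muHom_xS (F : Type) [Field F] (n : ℕ) : muHom F n (xS F n) = xQ F n := by
  simp [muHom, xS, xQ]

theorem liftQS_xQ (F : Type) [Field F] (n : ℕ) : liftQS F n (xQ F n) = xS F n := by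
  simp [liftQS, xS, xQ]

theorem IsUnitLift.isUnit {F : Type} [Field F] {n : ℕ} {a : Sq F n} (h : IsUnitLift F n a) :
    IsUnit a := by
  obtain ⟨q, hq, rfl⟩ := h
  exact hq.map _

theorem Polynomial.X_sub_one_pow_expChar_pow {R : Type*} [CommRing R] (p k : ℕ) [ExpChar R p] :
    ((X : R[X]) - 1) ^ p ^ k = X ^ p ^ k - 1 := by
  rw [sub_pow_expChar_pow, one_pow]

theorem xQ_sub_one_pow_expChar_pow (F : Type) [Field F] (p k : ℕ) [ExpChar F p] :
    (xQ F (p ^ k) - 1) ^ p ^ k = 0 := by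
  rw [xQ, ← map_one (Ideal.Quotient.mk _), ← map_sub, ← map_pow, X_sub_one_pow_expChar_pow,
    Ideal.Quotient.eq_zero_iff_mem]
  exact Ideal.subset_span rfl

theorem xS_sub_one_pow_expChar_pow (F : Type) [Field F] (p k : ℕ) [ExpChar F p] :
    (xS F (p ^ k) - 1) ^ p ^ k = 0 := by
  rw [← liftQS_xQ, ← map_one (liftQS F _), ← map_sub, ← map_pow, xQ_sub_one_pow_expChar_pow,
    map_zero]

theorem le_of_xQ_sub_one_pow_mem_span (F : Type) [Field F] (p k : ℕ) [ExpChar F p] {s t : ℕ}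
    (ht : t ≤ p ^ k) (h : (xQ F (p ^ k) - 1) ^ s ∈ Ideal.span {(xQ F (p ^ k) - 1) ^ t}) :
    t ≤ s := by
  have hX : (X : F[X]) - 1 ≠ 0 := X_sub_C_ne_zero 1
  have hXunit : ¬IsUnit ((X : F[X]) - 1) := not_isUnit_X_sub_C 1
  rw [← pow_dvd_pow_iff hX hXunit]
  have hmk : Ideal.Quotient.mk _ ((X : F[X]) - 1) = xQ F (p ^ k) - 1 := by simp [xQ]
  refine Ideal.Quotient.dvd_of_mk_mem_span_mk ?_ (by rwa [map_pow, map_pow, hmk])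
  rw [Ideal.span_singleton_le_span_singleton, ← X_sub_one_pow_expChar_pow p k]
  exact pow_dvd_pow _ ht

theorem le_of_pow_mem_torSet {F : Type} [Field F] {n i t s : ℕ} {C : Ideal (Sq F n)}
    (hC : HasTorDeg F n i C t) (h : uS F n ^ i * (xS F n - 1) ^ s ∈ C) :
    (xQ F n - 1) ^ s ∈ Ideal.span {(xQ F n - 1) ^ t} := by
  rw [← SetLike.mem_coe, ← hC.2]
  exact ⟨_, h, by simp [muHom_xS]⟩

theorem stmt_10_general (p m k : ℕ) (hp : Nat.Prime p)
    (F : Type) [Field F] [Fintype F] (hF : Fintype.card F = p ^ m)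
    (r₁ r₂ k₄ k₅ k₆ : ℕ) (hr₂₁ : r₂ ≤ r₁) (hr₁ : r₁ < p ^ k)
    (hk₄ : k₄ < r₂)
    (p₄ p₅ p₆ : Sq F (p ^ k))
    (hp₄ : IsUnitLift F (p ^ k) p₄) (hp₅ : IsUnitLift F (p ^ k) p₅)
    (hp₆ : IsUnitLift F (p ^ k) p₆)
    (C : Ideal (Sq F (p ^ k)))
    (hC : C = Ideal.span
      { uS F (p ^ k) * (xS F (p ^ k) - 1) ^ r₁
          + uS F (p ^ k) ^ 2 * (xS F (p ^ k) - 1) ^ k₄ * p₄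
          + uS F (p ^ k) ^ 3 * (xS F (p ^ k) - 1) ^ k₅ * p₅,
        uS F (p ^ k) ^ 2 * (xS F (p ^ k) - 1) ^ r₂
          + uS F (p ^ k) ^ 3 * (xS F (p ^ k) - 1) ^ k₆ * p₆ }) :
    uS F (p ^ k) ^ 3 * (xS F (p ^ k) - 1) ^ r₁ ∈ C ∧
    uS F (p ^ k) ^ 3 * (xS F (p ^ k) - 1) ^ (p ^ k - r₁ + k₄) ∈ C ∧
    uS F (p ^ k) ^ 3 * (xS F (p ^ k) - 1) ^ r₂ ∈ C ∧
    uS F (p ^ k) ^ 3 * (xS F (p ^ k) - 1) ^ (p ^ k - k₄ + k₅) ∈ C ∧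
    uS F (p ^ k) ^ 3 * (xS F (p ^ k) - 1) ^ (p ^ k - r₂ + k₆) ∈ C ∧
    (∀ t₃ : ℕ, HasTorDeg F (p ^ k) 3 C t₃ →
      t₃ ≤ min r₂ (min (p ^ k - r₁ + k₄) (min (p ^ k - k₄ + k₅) (p ^ k - r₂ + k₆)))) := by
  have : Fact p.Prime := ⟨hp⟩
  have : CharP F p := charP_of_card_eq_prime_pow hF
  have hu := uS_pow_four F (p ^ k)
  have hz := xS_sub_one_pow_expChar_pow F p k
  have hg₁ : uS F (p ^ k) * (xS F (p ^ k) - 1) ^ r₁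
      + uS F (p ^ k) ^ 2 * (xS F (p ^ k) - 1) ^ k₄ * p₄
      + uS F (p ^ k) ^ 3 * (xS F (p ^ k) - 1) ^ k₅ * p₅ ∈ C :=
    hC ▸ Ideal.subset_span (Set.mem_insert _ _)
  have hg₂ : uS F (p ^ k) ^ 2 * (xS F (p ^ k) - 1) ^ r₂
      + uS F (p ^ k) ^ 3 * (xS F (p ^ k) - 1) ^ k₆ * p₆ ∈ C :=
    hC ▸ Ideal.subset_span (Set.mem_insert_of_mem _ rfl)
  let _ := Sq.commRing F (p ^ k)
  obtain ⟨m₁, m₂, m₄⟩ := mem_of_first_generator_mem hu hz hp₄.isUnit hp₅.isUnit hr₁.le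
    (hk₄.le.trans hr₂₁) hg₁
  obtain ⟨m₃, m₅⟩ := mem_of_second_generator_mem hu hz hp₆.isUnit (hr₂₁.trans hr₁.le) hg₂
  refine ⟨m₁, m₂, m₃, m₄, m₅, fun t₃ ht₃ => ?_⟩
  have bound : ∀ s, uS F (p ^ k) ^ 3 * (xS F (p ^ k) - 1) ^ s ∈ C → t₃ ≤ s := fun s hs =>
    le_of_xQ_sub_one_pow_mem_span F p k ht₃.1 (le_of_pow_mem_torSet ht₃ hs)
  exact le_min (bound _ m₃) (le_min (bound _ m₂) (le_min (bound _ m₄) (bound _ m₅)))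

/-- the five elements `u³(x−1)^{r₁}`, `u³(x−1)^{n−r₁+k₄}`, `u³(x−1)^{r₂}`,
`u³(x−1)^{n−k₄+k₅}`, `u³(x−1)^{n−r₂+k₆}` lie in `C = ⟨g₁, g₂⟩`, and
`t₃ ≤ min{r₂, n−r₁+k₄, n−k₄+k₅, n−r₂+k₆}`. -/
theorem stmt_10 (p m k : ℕ) (hp : Nat.Prime p) (hm : 1 ≤ m) (hk : 1 ≤ k)
    (F : Type) [Field F] [Fintype F] (hF : Fintype.card F = p ^ m)
    (r₁ r₂ k₄ k₅ k₆ : ℕ) (hr₂₁ : r₂ ≤ r₁) (hr₁ : r₁ < p ^ k)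
    (hk₄ : k₄ < r₂) (hk₅ : k₅ < r₂) (hk₆ : k₆ < r₂)
    (p₄ p₅ p₆ : Sq F (p ^ k))
    (hp₄ : IsUnitLift F (p ^ k) p₄) (hp₅ : IsUnitLift F (p ^ k) p₅)
    (hp₆ : IsUnitLift F (p ^ k) p₆)
    (C : Ideal (Sq F (p ^ k)))
    (hC : C = Ideal.span
      { uS F (p ^ k) * (xS F (p ^ k) - 1) ^ r₁
          + uS F (p ^ k) ^ 2 * (xS F (p ^ k) - 1) ^ k₄ * p₄
          + uS F (p ^ k) ^ 3 * (xS F (p ^ k) - 1) ^ k₅ * p₅,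
        uS F (p ^ k) ^ 2 * (xS F (p ^ k) - 1) ^ r₂
          + uS F (p ^ k) ^ 3 * (xS F (p ^ k) - 1) ^ k₆ * p₆ }) :
    uS F (p ^ k) ^ 3 * (xS F (p ^ k) - 1) ^ r₁ ∈ C ∧
    uS F (p ^ k) ^ 3 * (xS F (p ^ k) - 1) ^ (p ^ k - r₁ + k₄) ∈ C ∧
    uS F (p ^ k) ^ 3 * (xS F (p ^ k) - 1) ^ r₂ ∈ C ∧
    uS F (p ^ k) ^ 3 * (xS F (p ^ k) - 1) ^ (p ^ k - k₄ + k₅) ∈ C ∧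
    uS F (p ^ k) ^ 3 * (xS F (p ^ k) - 1) ^ (p ^ k - r₂ + k₆) ∈ C ∧
    (∀ t₃ : ℕ, HasTorDeg F (p ^ k) 3 C t₃ →
      t₃ ≤ min r₂ (min (p ^ k - r₁ + k₄) (min (p ^ k - k₄ + k₅) (p ^ k - r₂ + k₆)))) :=
  stmt_10_general p m k hp F hF r₁ r₂ k₄ k₅ k₆ hr₂₁ hr₁ hk₄ p₄ p₅ p₆ hp₄ hp₅ hp₆ C hC
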